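/- arXiv:2201.11577 — 3 statements merged into one kernel-verified Lean document; each statement's English description precedes it below -/
import Mathlib

section
/- Consider a single TTL cache with Poisson request arrivals, exponential TTLs and exponential object fetch delays (an M/M/M cache): the inter-request time X, the TTL T and the delay Δ are independent, exponentially distributed random variables with rates λ > 0, λ_T > 0 and λ_Δ > 0 respectively. Define the object hit probability under delay as P_h(Δ) := E[N] / (1 + E[m(Δ)] + E[N]), where E[N] := P(X < T)/(1 − P(X < T)) is the expected number of hits between two misses and E[m(Δ)] := λ·E[Δ] is the expected number of requests arriving during the delay; P_h(0) denotes the same quantity with E[m(Δ)] replaced by 0. Then the delay impairment η := 1 − P_h(Δ)/P_h(0) satisfies η = τ̄_Δ / (τ̄_T + τ̄_Δ + 1), where τ̄_Δ := λ/λ_Δ is the ratio of the expected delay to the expected inter-request time and τ̄_T := λ/λ_T is the ratio of the expected TTL to the expected inter-request time. -/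
/-!
Conditioning on `X`, independence gives `P(X < T) = E[exp (-λ_T X)] = λ / (λ + λ_T)`, the Laplace
transform of `Exp(λ)` at `λ_T`; hence `E[N] = λ / λ_T = τ̄_T`, while `E[m(Δ)] = λ E[Δ] = τ̄_Δ`.
What remains is the rational identity
`1 - (1 + τ̄_T) / (1 + τ̄_Δ + τ̄_T) = τ̄_Δ / (τ̄_T + τ̄_Δ + 1)`.
-/

open MeasureTheory ProbabilityTheory Real Set

namespace ProbabilityTheory

variable {r : ℝ}

lemma expMeasure_eq_withDensity :
    expMeasure r = volume.withDensity (exponentialPDF r) := rfl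

lemma expMeasure_Ioi (hr : 0 < r) {x : ℝ} (hx : 0 ≤ x) :
    expMeasure r (Ioi x) = ENNReal.ofReal (exp (-(r * x))) := by
  have := isProbabilityMeasure_expMeasure hr
  have hexp_le_one : exp (-(r * x)) ≤ 1 := exp_le_one_iff.mpr (by nlinarith)
  rw [← compl_Iic, prob_compl_eq_one_sub measurableSet_Iic, ← ofReal_cdf, cdf_expMeasure_eq hr,
    if_pos hx, ← ENNReal.ofReal_one, ← ENNReal.ofReal_sub _ (by linarith), sub_sub_cancel]

lemma ae_nonneg_expMeasure : ∀ᵐ x ∂expMeasure r, 0 ≤ x := by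
  rw [ae_iff]
  simp only [not_le]
  change expMeasure r (Iio 0) = 0
  rw [expMeasure_eq_withDensity, withDensity_apply _ measurableSet_Iio]
  exact lintegral_exponentialPDF_of_nonpos le_rfl

lemma integral_expMeasure (hr : 0 ≤ r) (g : ℝ → ℝ) :
    ∫ x, g x ∂expMeasure r = ∫ x in Ioi 0, r * exp (-(r * x)) * g x := by
  rw [expMeasure_eq_withDensity, integral_withDensity_eq_integral_toReal_smul (f := exponentialPDF r)
      (measurable_exponentialPDFReal r).ennreal_ofReal
      (ae_of_all _ fun _ ↦ ENNReal.ofReal_lt_top),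
    ← integral_Ici_eq_integral_Ioi, ← integral_indicator measurableSet_Ici]
  congr with x
  by_cases hx : 0 ≤ x
  · rw [indicator_of_mem (mem_Ici.mpr hx), exponentialPDF_of_nonneg hx,
      ENNReal.toReal_ofReal (by positivity), smul_eq_mul]
  · rw [indicator_of_notMem (notMem_Ici.mpr (not_le.mp hx)), exponentialPDF_of_neg (not_le.mp hx),
      ENNReal.toReal_zero, zero_smul]

lemma integral_exp_neg_mul_expMeasure (hr : 0 ≤ r) {s : ℝ} (hs : 0 < r + s) :
    ∫ x, exp (-(s * x)) ∂expMeasure r = r / (r + s) := by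
  have h := integral_exp_mul_Ioi (neg_lt_zero.mpr hs) 0
  simp only [mul_zero, exp_zero] at h
  rw [integral_expMeasure hr]
  calc ∫ x in Ioi 0, r * exp (-(r * x)) * exp (-(s * x))
      = r * ∫ x in Ioi 0, exp (-(r + s) * x) := by
        rw [← integral_const_mul]
        congr with x
        rw [mul_assoc, ← exp_add]
        ring_nf
    _ = r / (r + s) := by rw [h]; field_simp

lemma integral_id_expMeasure (hr : 0 < r) : ∫ x, x ∂expMeasure r = 1 / r := by
  have h := integral_rpow_mul_exp_neg_mul_Ioi two_pos hr
  norm_num [Real.Gamma_two] at h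
  rw [integral_expMeasure hr.le]
  calc ∫ x in Ioi 0, r * exp (-(r * x)) * x
      = r * ∫ x in Ioi 0, x * exp (-(r * x)) := by
        rw [← integral_const_mul]
        congr with x
        ring
    _ = 1 / r := by rw [h]; field_simp

lemma expMeasure_prod_lt {a b : ℝ} (ha : 0 < a) (hb : 0 < b) :
    ((expMeasure a).prod (expMeasure b)) {p : ℝ × ℝ | p.1 < p.2}
      = ENNReal.ofReal (a / (a + b)) := by
  have := isProbabilityMeasure_expMeasure hb
  have hlaplace := integral_exp_neg_mul_expMeasure ha.le (s := b) (by linarith)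
  have hint : Integrable (fun x ↦ exp (-(b * x))) (expMeasure a) :=
    Integrable.of_integral_ne_zero (by rw [hlaplace]; positivity)
  rw [Measure.prod_apply (measurableSet_lt measurable_fst measurable_snd), ← hlaplace,
    ofReal_integral_eq_lintegral_ofReal hint (ae_of_all _ fun _ ↦ (exp_pos _).le)]
  refine lintegral_congr_ae ?_
  filter_upwards [ae_nonneg_expMeasure] with x hx
  exact expMeasure_Ioi hb hx

lemma IndepFun.measure_lt_eq_prod_map {Ω : Type*} [MeasurableSpace Ω] {μ : Measure Ω}
    [IsFiniteMeasure μ] {X Y : Ω → ℝ} (hXY : IndepFun X Y μ) (hX : Measurable X)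
    (hY : Measurable Y) :
    μ {ω | X ω < Y ω} = ((μ.map X).prod (μ.map Y)) {p | p.1 < p.2} := by
  rw [← hXY.map_prod_eq_prod_map_map hX.aemeasurable hY.aemeasurable,
    Measure.map_apply (hX.prodMk hY) (measurableSet_lt measurable_fst measurable_snd)]
  rfl

end ProbabilityTheory

/-- For a single M/M/M TTL cache (Poisson requests with rate `lam`, exponential TTL with
rate `lamT`, exponential object fetch delay with rate `lamD`), the delay impairment
`η = 1 - P_h(Δ)/P_h(0)` equals `τ̄_Δ / (τ̄_T + τ̄_Δ + 1)`, where
`P_h(Δ) = E[N]/(1 + E[m(Δ)] + E[N])`, `E[N] = P(X < T)/(1 - P(X < T))`,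
`E[m(Δ)] = lam * E[Δ]`, `τ̄_Δ = lam/lamD` and `τ̄_T = lam/lamT`. -/
theorem delay_impairment_single_MMM_cache
    {Ω : Type*} [MeasurableSpace Ω] (μ : Measure Ω) [IsProbabilityMeasure μ]
    (X T Δ : Ω → ℝ) (lam lamT lamD : ℝ)
    (hlam : 0 < lam) (hlamT : 0 < lamT) (hlamD : 0 < lamD)
    (hmX : Measurable X) (hmT : Measurable T) (hmΔ : Measurable Δ)
    (hX : μ.map X = expMeasure lam)
    (hT : μ.map T = expMeasure lamT)
    (hΔ : μ.map Δ = expMeasure lamD)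
    (hindep : iIndepFun ![X, T, Δ] μ)
    (p EN Em PhD Ph0 : ℝ)
    (hp : p = (μ {ω | X ω < T ω}).toReal)
    (hEN : EN = p / (1 - p))
    (hEm : Em = lam * ∫ ω, Δ ω ∂μ)
    (hPhD : PhD = EN / (1 + Em + EN))
    (hPh0 : Ph0 = EN / (1 + 0 + EN)) :
    1 - PhD / Ph0 = (lam / lamD) / (lam / lamT + lam / lamD + 1) := by
  have hXT : IndepFun X T μ := by simpa using hindep.indepFun (i := 0) (j := 1) (by decide)
  have hp_eq : p = lam / (lam + lamT) := by
    rw [hp, hXT.measure_lt_eq_prod_map hmX hmT, hX, hT, expMeasure_prod_lt hlam hlamT,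
      ENNReal.toReal_ofReal (by positivity)]
  have hEN_eq : EN = lam / lamT := by
    rw [hEN, hp_eq, one_sub_div (by positivity), add_sub_cancel_left,
      div_div_div_cancel_right₀ (by positivity)]
  have hEΔ : ∫ ω, Δ ω ∂μ = 1 / lamD := by
    rw [← integral_id_expMeasure hlamD, ← hΔ]
    exact (integral_map hmΔ.aemeasurable aestronglyMeasurable_id).symm
  have hEm_eq : Em = lam / lamD := by
    rw [hEm, hEΔ, mul_one_div]
  rw [hPhD, hPh0, hEN_eq, hEm_eq]
  field_simp
  ring
end

section
/- Let s be a finite type, q : s → s → ℝ, n ≥ 1, and define Q on tuples A, B : Fin n → s by Q(A,B) := Σ_{j ∈ Fin n} q(A j, B j) · Π_{k ≠ j} [A k = B k]. Then Q is lumpable with respect to the orbits of the coordinate-permutation action of Sym(Fin n): for every orbit ρ, every tuple A and every permutation σ of Fin n, Σ_{B ∈ ρ} Q(A, B) = Σ_{B ∈ ρ} Q(A ∘ σ, B). In other words, the aggregate transition rate from a state into any lumpable partition depends only on the partition containing that state. -/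
/-- The total transition matrix of the Kronecker-sum (level superposition) of `n`
independent copies of a MAP with total transition matrix `q` on the state space `s`:
`Q(A,B) = Σ_j q(A j, B j) · Π_{k ≠ j} [A k = B k]`. -/
noncomputable def kroneckerSumQ {s : Type*} [Fintype s] [DecidableEq s] {n : ℕ}
    (q : s → s → ℝ) (A B : Fin n → s) : ℝ :=
  ∑ j : Fin n, q (A j) (B j) *
    ∏ k ∈ Finset.univ.erase j, (if A k = B k then (1 : ℝ) else 0)

lemma kroneckerSumQ_comp {s : Type*} [Fintype s] [DecidableEq s] {n : ℕ}
    (q : s → s → ℝ) (A B : Fin n → s) (σ : Equiv.Perm (Fin n)) :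
    kroneckerSumQ q (A ∘ ⇑σ) (B ∘ ⇑σ) = kroneckerSumQ q A B := by
  unfold kroneckerSumQ
  refine Fintype.sum_equiv σ _ _ fun j => ?_
  simp only [Function.comp_apply]
  congr 1
  refine Finset.prod_bij (fun k _ => σ k) ?_ ?_ ?_ ?_
  · intro k hk
    simp only [Finset.mem_erase, Finset.mem_univ, and_true] at hk ⊢
    exact fun h => hk (σ.injective h)
  · intro a _ b _ h; exact σ.injective h
  · intro b hb
    refine ⟨σ.symm b, ?_, by simp⟩
    simp only [Finset.mem_erase, Finset.mem_univ, and_true] at hb ⊢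
    intro h; exact hb (by rw [← h]; simp)
  · intro k _; simp

/-- The Kronecker-sum MAP of `n` independent symmetric sub-trees is lumpable with respect
to the orbits of the coordinate-permutation action of `Sym(Fin n)`: for every orbit
(lumpable partition) `ρ = {A₀ ∘ τ : τ ∈ Sym(Fin n)}`, every state `A` and every
permutation `σ`, the aggregate rate into `ρ` satisfies
`Σ_{B ∈ ρ} Q(A, B) = Σ_{B ∈ ρ} Q(A ∘ σ, B)`. -/
theorem kroneckerSumQ_lumpable {s : Type*} [Fintype s] [DecidableEq s]
    {n : ℕ} (hn : 1 ≤ n) (q : s → s → ℝ) (A₀ A : Fin n → s) (σ : Equiv.Perm (Fin n)) :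
    ∑ B ∈ Finset.univ.filter (fun B : Fin n → s =>
        ∃ τ : Equiv.Perm (Fin n), B = A₀ ∘ ⇑τ), kroneckerSumQ q A B =
      ∑ B ∈ Finset.univ.filter (fun B : Fin n → s =>
        ∃ τ : Equiv.Perm (Fin n), B = A₀ ∘ ⇑τ), kroneckerSumQ q (A ∘ ⇑σ) B := by
  refine Finset.sum_nbij' (fun B => B ∘ ⇑σ) (fun B => B ∘ ⇑σ.symm) ?_ ?_ ?_ ?_ ?_
  · intro B hB
    simp only [Finset.mem_filter, Finset.mem_univ, true_and] at hB ⊢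
    obtain ⟨τ, rfl⟩ := hB
    exact ⟨σ.trans τ, by ext k; simp⟩
  · intro B hB
    simp only [Finset.mem_filter, Finset.mem_univ, true_and] at hB ⊢
    obtain ⟨τ, rfl⟩ := hB
    exact ⟨σ.symm.trans τ, by ext k; simp⟩
  · intro B _; ext k; simp
  · intro B _; ext k; simp
  · intro B _
    exact (kroneckerSumQ_comp q A B σ).symm
end

section
/- Let G be a finite tree (a connected acyclic simple graph) and let i ≠ j be two vertices of G each having degree at least 2 (non-leaf nodes). Then the transposition of i and j (the permutation swapping i and j and fixing all other vertices) is not a graph automorphism of G; i.e. permuting two non-leaf vertices without simultaneously permuting their sub-trees never preserves the edge set. -/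
/-!
If the transposition `(i j)` is an automorphism, every neighbour `x ≠ j` of `i` is also a
neighbour of `j`. Each neighbour `z` of `i` then starts a path from `i` to `j`: the edge `ij`
itself if `z = j`, and `i - z - j` otherwise. In an acyclic graph there is only one such path,
so `i` has a single neighbour, contradicting `2 ≤ G.degree i`.
-/

namespace SimpleGraph

variable {V : Type*} {G : SimpleGraph V} {i j z : V}

lemma exists_isPath_snd_eq (hij : i ≠ j) (hiz : G.Adj i z) (hzj : z ≠ j → G.Adj z j) :
    ∃ p : G.Walk i j, p.IsPath ∧ p.snd = z := by
  by_cases hz : z = j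
  · subst hz
    exact ⟨.cons hiz .nil, by simp [hij], rfl⟩
  · refine ⟨.cons hiz (.cons (hzj hz) .nil), ?_, rfl⟩
    simp [Walk.isPath_def, hij, hz, hiz.ne]

theorem IsAcyclic.degree_le_one_of_forall_adj (hG : G.IsAcyclic) (hij : i ≠ j)
    (h : ∀ x, G.Adj i x → x ≠ j → G.Adj x j) [Fintype (G.neighborSet i)] :
    G.degree i ≤ 1 := by
  rw [← card_neighborFinset_eq_degree, Finset.card_le_one]
  intro x hx y hy
  rw [mem_neighborFinset] at hx hy
  obtain ⟨p, hp, rfl⟩ := exists_isPath_snd_eq hij hx (h x hx)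
  obtain ⟨q, hq, rfl⟩ := exists_isPath_snd_eq hij hy (h y hy)
  have hpq : p = q := congrArg Subtype.val ((hG.subsingleton_path i j).elim ⟨p, hp⟩ ⟨q, hq⟩)
  rw [hpq]

lemma adj_of_forall_adj_swap [DecidableEq V]
    (h : ∀ u v : V, G.Adj (Equiv.swap i j u) (Equiv.swap i j v) ↔ G.Adj u v)
    {x : V} (hix : G.Adj i x) (hxj : x ≠ j) : G.Adj x j := by
  have := (h i x).mpr hix
  rwa [Equiv.swap_apply_left, Equiv.swap_apply_of_ne_of_ne hix.ne' hxj, adj_comm] at this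

end SimpleGraph

theorem nonleaf_swap_not_automorphism_general {V : Type*} [Fintype V] [DecidableEq V]
    (G : SimpleGraph V) [DecidableRel G.Adj] (hG : G.IsTree)
    (i j : V) (hij : i ≠ j) (hi : 2 ≤ G.degree i) :
    ¬ ∀ u v : V, G.Adj (Equiv.swap i j u) (Equiv.swap i j v) ↔ G.Adj u v := by
  intro h
  have := hG.isAcyclic.degree_le_one_of_forall_adj hij
    fun _ hix hxj => G.adj_of_forall_adj_swap h hix hxj
  omega

/-- In a finite tree, the transposition of two distinct non-leaf vertices `i` and `j`
(each of degree at least 2) is never a graph automorphism: permuting two non-leaf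
vertices without simultaneously permuting their sub-trees does not preserve the edges. -/
theorem nonleaf_swap_not_automorphism {V : Type*} [Fintype V] [DecidableEq V]
    (G : SimpleGraph V) [DecidableRel G.Adj] (hG : G.IsTree)
    (i j : V) (hij : i ≠ j) (hi : 2 ≤ G.degree i) (hj : 2 ≤ G.degree j) :
    ¬ ∀ u v : V, G.Adj (Equiv.swap i j u) (Equiv.swap i j v) ↔ G.Adj u v :=
  nonleaf_swap_not_automorphism_general G hG i j hij hi
end
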